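/- Let e = 2m with m ≥ 1 and suppose s divides m. Then ψ_3(0) = ((p-1)^2/2) p^{e+m-3} if m/s ≡ 1 (mod 2), and ψ_3(0) = ((p-1)^2/2) p^{e+m+s-3} if m/s ≡ 0 (mod 2). -/

import Mathlib

open scoped BigOperators

noncomputable section

/-- The primitive `p`-th root of unity `ζ_p = exp(2πi/p)`. -/
def zetaP (p : ℕ) : ℂ := Complex.exp (2 * Real.pi * Complex.I / p)

/-- The absolute trace map from `F_q = GF(p^e)` onto `F_p`. -/
def tr (p e : ℕ) [Fact p.Prime] (x : GaloisField p e) : ZMod p :=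
  Algebra.trace (ZMod p) (GaloisField p e) x

/-- The Weil sum `S(α, β) = Σ_{x ∈ F_q} ζ_p^{Tr(α x^{p^l+1} + β x)}`. -/
def weilSum (p e l : ℕ) [Fact p.Prime] (α β : GaloisField p e) : ℂ :=
  letI : Fintype (GaloisField p e) := Fintype.ofFinite _
  ∑ x : GaloisField p e, zetaP p ^ (tr p e (α * x ^ (p ^ l + 1) + β * x)).val

/- The quadratic character `η` of `F_p`, integer-valued:
`η(0) = 0`, `η(x) = 1` for nonzero squares, `η(x) = -1` for nonsquares. -/
open Classical in
def eta (p : ℕ) (x : ZMod p) : ℤ :=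
  if x = 0 then 0 else if IsSquare x then 1 else -1

/- The cyclotomic classes of order 2 in `F_p^*`: `cyc p 0` is the set of nonzero
squares `C_0^{(2,p)}`, and `cyc p 1` is the set of nonsquares `C_1^{(2,p)}`. -/
open Classical in
def cyc (p : ℕ) [Fact p.Prime] (i : ℕ) : Finset (ZMod p) :=
  Finset.univ.filter (fun x => x ≠ 0 ∧ (if i = 0 then IsSquare x else ¬ IsSquare x))

/-- `ψ_3(a) = ((p-1)/2) p^{e-3} Σ_{z1 ∈ F_p^*} ζ_p^{-z1} Σ_{z3 ∈ F_p^*} S(z1, a z3)`. -/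
def psi3 (p e l : ℕ) [Fact p.Prime] (a : GaloisField p e) : ℂ :=
  ((p : ℂ) - 1) / 2 * (p : ℂ) ^ ((e : ℤ) - 3) *
    ∑ z1 ∈ ({0}ᶜ : Finset (ZMod p)), zetaP p ^ (-z1).val *
      ∑ z3 ∈ ({0}ᶜ : Finset (ZMod p)),
        weilSum p e l (algebraMap (ZMod p) (GaloisField p e) z1)
          (a * algebraMap (ZMod p) (GaloisField p e) z3)

/-- `ψ_4^{(i)}(a, b) = p^{e-3} Σ_{c ∈ C_i} Σ_{z1 ∈ F_p^*} ζ_p^{-z1}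
      Σ_{z2 ∈ F_p^*} ζ_p^{-c z2} S(z1, -a b⁻¹ z2)`, for `b ∈ F_p^*`. -/
def psi4 (p e l : ℕ) [Fact p.Prime] (i : ℕ) (a : GaloisField p e) (b : ZMod p) : ℂ :=
  (p : ℂ) ^ ((e : ℤ) - 3) *
    ∑ c ∈ cyc p i, ∑ z1 ∈ ({0}ᶜ : Finset (ZMod p)), zetaP p ^ (-z1).val *
      ∑ z2 ∈ ({0}ᶜ : Finset (ZMod p)), zetaP p ^ (-(c * z2)).val *
        weilSum p e l (algebraMap (ZMod p) (GaloisField p e) z1)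
          (-a * algebraMap (ZMod p) (GaloisField p e) (b⁻¹ * z2))

/-- `T_i(a,b) = |{(x1,x2) ∈ F_q² : Tr(x1^{p^l+1}) = 1, Tr(x2) ∈ C_i, Tr(a x1 + b x2) = 0}|`. -/
def Tcount (p e l : ℕ) [Fact p.Prime] (i : ℕ) (a b : GaloisField p e) : ℕ :=
  Nat.card {x : GaloisField p e × GaloisField p e //
    tr p e (x.1 ^ (p ^ l + 1)) = 1 ∧ tr p e x.2 ∈ cyc p i ∧ tr p e (a * x.1 + b * x.2) = 0}

/-- The defining set `D_i = {(x1,x2) ∈ F_q² : Tr(x1^{p^l+1}) = 1, Tr(x2) ∈ C_i^{(2,p)}}`. -/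
def Dset (p e l : ℕ) [Fact p.Prime] (i : ℕ) : Set (GaloisField p e × GaloisField p e) :=
  {x | tr p e (x.1 ^ (p ^ l + 1)) = 1 ∧ tr p e x.2 ∈ cyc p i}

/-- The codeword of `C_{D_i}` indexed by `(a, b) ∈ F_q²`:
the vector `(Tr(a x1 + b x2))_{(x1,x2) ∈ D_i}`. -/
def codeword (p e l : ℕ) [Fact p.Prime] (i : ℕ) (a b : GaloisField p e) :
    Dset p e l i → ZMod p :=
  fun x => tr p e (a * x.1.1 + b * x.1.2)

/-- The linear code `C_{D_i} = {(Tr(a x1 + b x2))_{(x1,x2) ∈ D_i} : a, b ∈ F_q}`. -/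
def code (p e l : ℕ) [Fact p.Prime] (i : ℕ) : Set (Dset p e l i → ZMod p) :=
  Set.range (fun ab : GaloisField p e × GaloisField p e => codeword p e l i ab.1 ab.2)

/-- The Hamming weight of a vector: the number of nonzero coordinates. -/
def wt {ι : Type*} {p : ℕ} (c : ι → ZMod p) : ℕ := Nat.card {x : ι // c x ≠ 0}

/-!
Let `T(a) = S(a, 0)` and `k = p^l + 1`, so that
`ψ₃(0) = ((p-1)²/2) p^(e-3) ∑_{z ≠ 0} ζ_p^(-z) T(z)`. Since `gcd(k, q - 1) = p^s + 1`,
every `z ∈ F_p^*` is a `k`-th power in `F_q`, so `T(z) = T(1)` for `z ≠ 0` and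
`ψ₃(0) = -((p-1)²/2) p^(e-3) T(1)`.

Substituting `x = u + y` in `T(1) T(-1) = T(1)²` gives `T(1)² = q · #{u | u^(p^(2l)) = -u}`, and
counting in the cyclic group `F_q^*` this set has `1` element if `m/s` is odd and `p^(2s)` if `m/s`
is even. Hence `T(1) = ±p^(m+δ)` with `δ ∈ {0, s}` and `(m+δ)/s` odd. For the sign,
orthogonality gives `p · #{x | Tr(x^k) = 1} = q - T(1)`, and the fibres of `x ↦ x^k` on `F_q^*`
have `p^s + 1` elements, so `T(1) ≡ 1 (mod p^s + 1)`, whereas `p^(m+δ) ≡ -1`.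
-/

open Finset

namespace MonoidHom

variable {G H : Type*} [Group G] [Group H] [Fintype G] [DecidableEq H]

theorem card_filter_eq_card_ker (f : G →* H) {c : H} (hc : c ∈ f.range) :
    #{g | f g = c} = Nat.card f.ker := by
  classical
  obtain ⟨a, rfl⟩ := hc
  rw [← Nat.card_congr (f.fiberEquivKer a), Nat.card_eq_card_toFinset]
  congr 1
  ext g
  simp

theorem card_ker_dvd_card_filter (f : G →* H) (P : H → Prop) [DecidablePred P] :
    Nat.card f.ker ∣ #{g | P (f g)} := by
  rw [card_eq_sum_card_fiberwise (f := f) (t := {c ∈ univ.image f | P c})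
    (fun g hg => by simp_all)]
  refine dvd_sum fun c hc => ?_
  simp only [mem_filter, mem_image, mem_univ, true_and] at hc
  obtain ⟨⟨a, rfl⟩, hPc⟩ := hc
  rw [← card_filter_eq_card_ker f ⟨a, rfl⟩, filter_filter]
  exact dvd_of_eq (congrArg card (filter_congr fun g _ => by aesop))

end MonoidHom

namespace IsCyclic

variable {G : Type*} [CommGroup G] [Finite G] [IsCyclic G]

theorem range_powMonoidHom (k : ℕ) :
    (powMonoidHom k : G →* G).range =
      (powMonoidHom (Nat.card G / (Nat.card G).gcd k)).ker := by
  set n := Nat.card G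
  refine Subgroup.eq_of_le_of_card_ge ?_ ?_
  · rintro _ ⟨w, rfl⟩
    rw [MonoidHom.mem_ker, powMonoidHom_apply, powMonoidHom_apply, ← pow_mul,
      ← Nat.mul_div_assoc _ (Nat.gcd_dvd_left n k), mul_comm,
      Nat.mul_div_assoc _ (Nat.gcd_dvd_right n k), pow_mul, pow_card_eq_one', one_pow]
  · rw [card_powMonoidHom_ker, card_powMonoidHom_range,
      Nat.gcd_eq_right (Nat.div_dvd_of_dvd (Nat.gcd_dvd_left n k))]

theorem exists_pow_eq_iff (k : ℕ) (c : G) :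
    (∃ w, w ^ k = c) ↔ c ^ (Nat.card G / (Nat.card G).gcd k) = 1 :=
  SetLike.ext_iff.mp (range_powMonoidHom k) c

theorem card_pow_eq [Fintype G] [DecidableEq G] {k : ℕ} {c : G} (hc : ∃ w, w ^ k = c) :
    #{w | w ^ k = c} = (Fintype.card G).gcd k := by
  rw [← Nat.card_eq_fintype_card, ← card_powMonoidHom_ker]
  exact MonoidHom.card_filter_eq_card_ker (powMonoidHom k : G →* G) hc

end IsCyclic

theorem card_filter_eq_card_filter_units_add {G₀ : Type*} [GroupWithZero G₀] [Fintype G₀]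
    [DecidableEq G₀] (P : G₀ → Prop) [DecidablePred P] :
    #{x | P x} = #{u : G₀ˣ | P u} + if P 0 then 1 else 0 := by
  rw [← card_filter_add_card_filter_not (p := (· ≠ 0)), filter_filter, filter_filter]
  congr 1
  · refine card_nbij' (fun x => if h : x = 0 then 1 else Units.mk0 x h) (fun u => u)
      ?_ ?_ ?_ ?_ <;> intro x hx <;> simp_all
  · split_ifs with h
    · exact card_eq_one.mpr ⟨0, by ext; aesop⟩
    · exact card_eq_zero.mpr (filter_eq_empty_iff.mpr (by aesop))

namespace Nat

theorem pow_add_one_dvd_pow_two_mul_sub_one (x n : ℕ) : x ^ n + 1 ∣ x ^ (2 * n) - 1 :=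
  ⟨x ^ n - 1, by rw [mul_comm 2, pow_mul, ← Nat.sq_sub_sq, one_pow]⟩

theorem odd_geom_sum_iff {x : ℕ} (hx : Odd x) (n : ℕ) :
    Odd (∑ j ∈ range n, x ^ j) ↔ Odd n := by
  induction n with
  | zero => simp
  | succ n ih =>
    rw [sum_range_succ, Nat.odd_add, ih, Nat.odd_add_one,
      iff_false_intro (Nat.not_even_iff_odd.mpr hx.pow), iff_false]

theorem odd_pow_sub_one_div_iff {x a : ℕ} (hx : Odd x) (hx1 : 1 < x) (ha : 0 < a) (b : ℕ) :
    Odd ((x ^ (a * b) - 1) / (x ^ a - 1)) ↔ Odd b := by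
  rw [pow_mul, ← Nat.geomSum_eq (hx1.trans_le (Nat.le_self_pow ha.ne' x)),
    odd_geom_sum_iff hx.pow]

theorem gcd_eq_and_odd_div_of_gcd_two_mul_eq {l m s : ℕ} (hm : 0 < m) (hs : l.gcd (2 * m) = s)
    (hsm : s ∣ m) : l.gcd m = s ∧ Odd (l / s) := by
  have hs0 : 0 < s := hs ▸ Nat.gcd_pos_of_pos_right l (by omega)
  have hsl : s ∣ l := hs ▸ Nat.gcd_dvd_left l (2 * m)
  refine ⟨Nat.dvd_antisymm (hs ▸ Nat.dvd_gcd (Nat.gcd_dvd_left l m)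
    ((Nat.gcd_dvd_right l m).mul_left 2)) (Nat.dvd_gcd hsl hsm), ?_⟩
  refine Nat.not_even_iff_odd.mp fun ⟨c, hc⟩ => ?_
  have h2s : 2 * s ∣ l.gcd (2 * m) :=
    Nat.dvd_gcd ⟨c, by rw [← Nat.mul_div_cancel' hsl, hc]; ring⟩ (Nat.mul_dvd_mul_left 2 hsm)
  have := Nat.le_of_dvd hs0 (hs ▸ h2s)
  omega

theorem gcd_pow_add_one_pow_sub_one {x l m s : ℕ} (hx : 0 < x) (hs : l.gcd m = s)
    (hl : Odd (l / s)) : (x ^ l + 1).gcd (x ^ (2 * m) - 1) = x ^ s + 1 := by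
  have hsl : s ∣ l := hs ▸ l.gcd_dvd_left m
  obtain ⟨c, hc⟩ := hl
  have hl' : l = s + 2 * s * c := by
    rw [← Nat.mul_div_cancel' hsl, hc]; ring
  refine Nat.dvd_antisymm ?_ (Nat.dvd_gcd ?_ ?_)
  · set g := (x ^ l + 1).gcd (x ^ (2 * m) - 1)
    have hg : g ∣ x ^ (2 * s) - 1 := by
      rw [← hs, ← Nat.gcd_mul_left, ← Nat.pow_sub_one_gcd_pow_sub_one]
      exact Nat.dvd_gcd ((Nat.gcd_dvd_left _ _).trans (pow_add_one_dvd_pow_two_mul_sub_one x l))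
        (Nat.gcd_dvd_right _ _)
    have hmod : x ^ (2 * s) ≡ 1 [MOD g] :=
      ((Nat.modEq_iff_dvd' (Nat.one_le_pow _ _ hx)).mpr hg).symm
    have hl_mod : x ^ l + 1 ≡ x ^ s + 1 [MOD g] := by
      rw [hl', pow_add, pow_mul]
      simpa using ((hmod.pow c).mul_left (x ^ s)).add_right 1
    exact Nat.modEq_zero_iff_dvd.mp
      (hl_mod.symm.trans (Nat.modEq_zero_iff_dvd.mpr (Nat.gcd_dvd_left _ _)))
  · rw [hl', show s + 2 * s * c = s * (2 * c + 1) by ring, pow_mul]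
    simpa using Odd.nat_add_dvd_pow_add_pow (x ^ s) 1 (odd_two_mul_add_one c)
  · exact (pow_add_one_dvd_pow_two_mul_sub_one x s).trans
      (Nat.pow_sub_one_dvd_pow_sub_one x (Nat.mul_dvd_mul_left 2 (hs ▸ l.gcd_dvd_right m)))

end Nat

theorem Int.eq_neg_pow_of_sq_eq_of_modEq {x s a : ℕ} {T : ℤ} (hx : 2 ≤ x) (hs : 0 < s)
    (ha : Odd a) (hT : T ^ 2 = ((x : ℤ) ^ (s * a)) ^ 2) (hmod : T ≡ 1 [ZMOD x ^ s + 1]) :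
    T = -(x : ℤ) ^ (s * a) := by
  have hneg : (x : ℤ) ^ (s * a) ≡ -1 [ZMOD x ^ s + 1] := by
    have : (x : ℤ) ^ s ≡ -1 [ZMOD x ^ s + 1] := Int.modEq_iff_dvd.mpr ⟨-1, by ring⟩
    simpa [pow_mul, ha.neg_one_pow] using this.pow a
  refine (sq_eq_sq_iff_eq_or_eq_neg.mp hT).resolve_left fun h => ?_
  have h2 : (x : ℤ) ^ s + 1 ∣ 2 := by
    have := (Int.ModEq.dvd (hmod.symm.trans (h ▸ hneg))).neg_right
    norm_num at this
    exact this
  have hxs : (2 : ℤ) ≤ x ^ s := by exact_mod_cast hx.trans (Nat.le_self_pow hs.ne' x)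
  have := Int.le_of_dvd two_pos h2
  omega

section TraceCharacter

variable (p : ℕ) [Fact p.Prime]

theorem zetaP_pow_val (z : ZMod p) : zetaP p ^ z.val = ZMod.stdAddChar z := by
  rw [ZMod.stdAddChar_apply, ZMod.toCircle_apply, zetaP, ← Complex.exp_nat_mul]
  ring_nf

variable {p} in
theorem sum_compl_stdAddChar_neg_mul {f : ZMod p → ℂ} {c : ℂ} (hf : ∀ z ≠ 0, f z = c) :
    ∑ z ∈ ({0}ᶜ : Finset (ZMod p)), ZMod.stdAddChar (-z) * f z = -c := by
  have hsum := AddChar.sum_mulShift (-1) (ZMod.isPrimitive_stdAddChar p)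
  rw [if_neg (neg_ne_zero.mpr one_ne_zero), Nat.cast_zero,
    ← sum_compl_add_sum {0}, sum_singleton] at hsum
  rw [sum_congr rfl fun z hz => by rw [hf z (by simpa using hz)], ← sum_mul]
  simp only [mul_neg_one, neg_zero, AddChar.map_zero_eq_one] at hsum
  linear_combination c * hsum

variable (F : Type*) [Field F] [Algebra (ZMod p) F]

def traceChar : AddChar F ℂ :=
  ZMod.stdAddChar.compAddMonoidHom (Algebra.trace (ZMod p) F).toAddMonoidHom

variable {F}

theorem traceChar_apply (x : F) :
    traceChar p F x = ZMod.stdAddChar (Algebra.trace (ZMod p) F x) := rfl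

theorem traceChar_algebraMap_mul (z : ZMod p) (x : F) :
    traceChar p F (algebraMap (ZMod p) F z * x) =
      ZMod.stdAddChar (z * Algebra.trace (ZMod p) F x) := by
  rw [traceChar_apply, ← Algebra.smul_def, map_smul, smul_eq_mul]

variable [Fintype F]

theorem isPrimitive_traceChar : (traceChar p F).IsPrimitive := by
  refine AddChar.IsPrimitive.of_ne_one fun h => ?_
  obtain ⟨x, hx⟩ := Algebra.trace_surjective (ZMod p) F 1
  have := congrArg (· x) h
  simp only [traceChar_apply, hx, AddChar.one_apply] at this
  exact one_ne_zero (((ZMod.isPrimitive_stdAddChar p).zmod_char_eq_one_iff p 1).mp this)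

theorem sum_traceChar_mul [DecidableEq F] (b : F) :
    ∑ x : F, traceChar p F (x * b) = if b = 0 then (Fintype.card F : ℂ) else 0 := by
  rw [AddChar.sum_mulShift b (isPrimitive_traceChar p), Nat.cast_ite, Nat.cast_zero]

theorem sum_traceChar_mul_pow_char_pow [DecidableEq F] (b : F) (n : ℕ) :
    ∑ x : F, traceChar p F (b * x ^ p ^ n) = if b = 0 then (Fintype.card F : ℂ) else 0 := by
  have : ExpChar F p := expChar_of_injective_algebraMap (algebraMap (ZMod p) F).injective p
  rw [← sum_traceChar_mul p b]
  exact Fintype.sum_bijective _ (bijective_iterateFrobenius F p n) _ _ fun x => by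
    rw [iterateFrobenius_def, mul_comm]

theorem trace_pow_char_pow (n : ℕ) (x : F) :
    Algebra.trace (ZMod p) F (x ^ p ^ n) = Algebra.trace (ZMod p) F x := by
  induction n with
  | zero => simp
  | succ n ih =>
    rw [pow_succ, pow_mul, ← ih]
    simpa [ZMod.card] using Algebra.trace_eq_of_algEquiv
      (FiniteField.frobeniusAlgEquivOfAlgebraic (ZMod p) F) (x ^ p ^ n)

variable {p} in
theorem trace_pow_add_one_eq_zero (hp : p ≠ 2) (l : ℕ) {u : F} (hu : u ^ p ^ (2 * l) = -u) :
    Algebra.trace (ZMod p) F (u ^ (p ^ l + 1)) = 0 := by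
  have hneg : (u ^ (p ^ l + 1)) ^ p ^ l = -u ^ (p ^ l + 1) := by
    rw [← pow_mul, add_one_mul, ← pow_add, ← two_mul, pow_add, hu, pow_succ]
    ring
  have h2 : (2 : ZMod p) * Algebra.trace (ZMod p) F (u ^ (p ^ l + 1)) = 0 := by
    have := trace_pow_char_pow p l (u ^ (p ^ l + 1))
    rw [hneg, map_neg] at this
    linear_combination -this
  exact (mul_eq_zero.mp h2).resolve_left (Ring.two_ne_zero (by rwa [ZMod.ringChar_zmod_n]))

theorem traceChar_add_pow_sub_pow (l : ℕ) (u y : F) :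
    traceChar p F ((u + y) ^ (p ^ l + 1) - y ^ (p ^ l + 1)) =
      traceChar p F (u ^ (p ^ l + 1)) * traceChar p F ((u + u ^ p ^ (2 * l)) * y ^ p ^ l) := by
  have : CharP F p := charP_of_injective_algebraMap' (ZMod p) (A := F) p
  have hexp : (u + y) ^ (p ^ l + 1) - y ^ (p ^ l + 1) =
      u ^ (p ^ l + 1) + (u * y ^ p ^ l + u ^ p ^ l * y) := by
    rw [pow_succ, add_pow_char_pow, pow_succ, pow_succ]
    ring
  -- raise `u ^ p ^ l * y` to the power `p ^ l` under the trace
  have htr : Algebra.trace (ZMod p) F (u * y ^ p ^ l + u ^ p ^ l * y) =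
      Algebra.trace (ZMod p) F ((u + u ^ p ^ (2 * l)) * y ^ p ^ l) := by
    rw [map_add, ← trace_pow_char_pow p l (u ^ p ^ l * y), ← map_add, mul_pow, ← pow_mul,
      ← pow_add, ← two_mul]
    ring_nf
  rw [hexp, AddChar.map_add_eq_mul, traceChar_apply p (_ + _), htr]
  rfl

end TraceCharacter

section PowCharSum

variable {F : Type*} [Field F] [Fintype F]

def powCharSum (ψ : AddChar F ℂ) (k : ℕ) (a : F) : ℂ := ∑ x, ψ (a * x ^ k)

theorem powCharSum_zero (ψ : AddChar F ℂ) (k : ℕ) : powCharSum ψ k 0 = Fintype.card F := by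
  simp [powCharSum]

theorem powCharSum_pow_mul (ψ : AddChar F ℂ) (k : ℕ) {w : F} (hw : w ≠ 0) (a : F) :
    powCharSum ψ k (w ^ k * a) = powCharSum ψ k a :=
  Fintype.sum_equiv (Equiv.mulLeft₀ w hw) _ _ fun x => by
    simp only [Equiv.mulLeft₀_apply, mul_pow]
    congr 1
    ring

variable (p : ℕ) [Fact p.Prime] [Algebra (ZMod p) F]

theorem natCast_mul_card_trace_pow_eq_one (k : ℕ) :
    (p : ℂ) * #{x : F | Algebra.trace (ZMod p) F (x ^ k) = 1} =
      ∑ z : ZMod p, ZMod.stdAddChar (-z) *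
        powCharSum (traceChar p F) k (algebraMap (ZMod p) F z) := by
  have horth : ∀ x : F, ∑ z : ZMod p, ZMod.stdAddChar (-z) *
      ZMod.stdAddChar (z * Algebra.trace (ZMod p) F (x ^ k)) =
        if Algebra.trace (ZMod p) F (x ^ k) = 1 then (p : ℂ) else 0 := by
    intro x
    simp_rw [← AddChar.map_add_eq_mul, show ∀ z : ZMod p,
      -z + z * Algebra.trace (ZMod p) F (x ^ k) = z * (Algebra.trace (ZMod p) F (x ^ k) - 1)
      from fun z => by ring]
    simp [AddChar.sum_mulShift _ (ZMod.isPrimitive_stdAddChar p), sub_eq_zero]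
  simp_rw [powCharSum, mul_sum, traceChar_algebraMap_mul]
  rw [sum_comm, sum_congr rfl fun x _ => horth x, sum_ite, sum_const_zero, add_zero, sum_const,
    nsmul_eq_mul, mul_comm]

theorem powCharSum_one_mul_neg_one (hp : p ≠ 2) (l : ℕ) [DecidableEq F] :
    powCharSum (traceChar p F) (p ^ l + 1) 1 * powCharSum (traceChar p F) (p ^ l + 1) (-1) =
      Fintype.card F * #{u : F | u ^ p ^ (2 * l) = -u} := by
  -- the inner sum is a character sum of a linear form in `y ^ p ^ l`
  have hinner : ∀ u : F, ∑ y : F, traceChar p F ((u + y) ^ (p ^ l + 1) - y ^ (p ^ l + 1)) =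
      if u ^ p ^ (2 * l) = -u then (Fintype.card F : ℂ) else 0 := by
    intro u
    simp_rw [traceChar_add_pow_sub_pow, ← mul_sum, sum_traceChar_mul_pow_char_pow,
      add_eq_zero_iff_eq_neg', mul_ite, mul_zero]
    refine if_ctx_congr Iff.rfl (fun hu => ?_) fun _ => rfl
    rw [traceChar_apply, trace_pow_add_one_eq_zero hp l hu, AddChar.map_zero_eq_one, one_mul]
  calc powCharSum (traceChar p F) (p ^ l + 1) 1 * powCharSum (traceChar p F) (p ^ l + 1) (-1)
      = ∑ y : F, ∑ x : F, traceChar p F (x ^ (p ^ l + 1) - y ^ (p ^ l + 1)) := by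
        simp_rw [powCharSum, sum_mul_sum, sub_eq_add_neg, AddChar.map_add_eq_mul, one_mul,
          neg_one_mul]
        exact sum_comm
    _ = ∑ y : F, ∑ u : F, traceChar p F ((u + y) ^ (p ^ l + 1) - y ^ (p ^ l + 1)) :=
        sum_congr rfl fun y _ => (Fintype.sum_equiv (Equiv.addRight y) _ _ fun u => rfl).symm
    _ = _ := by
        rw [sum_comm, sum_congr rfl fun u _ => hinner u, sum_ite, sum_const_zero, add_zero,
          sum_const, nsmul_eq_mul, mul_comm]

end PowCharSum

section FieldOfSquareOrder

variable {p : ℕ} {F : Type*} [Field F] [Fintype F] [DecidableEq F] {l m s : ℕ}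

theorem card_units_of_card_eq (hF : Fintype.card F = p ^ (2 * m)) :
    Nat.card Fˣ = p ^ (2 * m) - 1 := by
  rw [Nat.card_eq_fintype_card, Fintype.card_units, hF]

variable [Fact p.Prime]

theorem gcd_card_units_pow_add_one (hF : Fintype.card F = p ^ (2 * m)) (hs : l.gcd m = s)
    (hl : Odd (l / s)) : (Nat.card Fˣ).gcd (p ^ l + 1) = p ^ s + 1 := by
  rw [card_units_of_card_eq hF, Nat.gcd_comm,
    Nat.gcd_pow_add_one_pow_sub_one (Fact.out : p.Prime).pos hs hl]

variable [Algebra (ZMod p) F]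

theorem exists_pow_eq_neg_one_iff (hp : p ≠ 2) (hF : Fintype.card F = p ^ (2 * m))
    (hs : l.gcd m = s) (hs0 : 0 < s) :
    (∃ w : Fˣ, w ^ (p ^ (2 * l) - 1) = -1) ↔ Even (m / s) := by
  have : CharP F p := charP_of_injective_algebraMap' (ZMod p) (A := F) p
  have hne : (-1 : Fˣ) ≠ 1 := fun h => Ring.neg_one_ne_one_of_char_ne_two
    (by rwa [ringChar.eq F p]) (congrArg Units.val h)
  have hm : 2 * m = 2 * s * (m / s) := by
    rw [mul_assoc, Nat.mul_div_cancel' (hs ▸ Nat.gcd_dvd_right l m)]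
  rw [IsCyclic.exists_pow_eq_iff, card_units_of_card_eq hF, Nat.pow_sub_one_gcd_pow_sub_one,
    Nat.gcd_mul_left, Nat.gcd_comm, hs, neg_one_pow_eq_one_iff_even hne, hm,
    ← Nat.not_odd_iff_even, Nat.odd_pow_sub_one_div_iff ((Fact.out : p.Prime).odd_of_ne_two hp)
      (Fact.out : p.Prime).one_lt (by omega), Nat.not_odd_iff_even]

theorem card_pow_char_pow_eq_neg (hp : p ≠ 2) (hF : Fintype.card F = p ^ (2 * m))
    (hs : l.gcd m = s) (hs0 : 0 < s) :
    #{u : F | u ^ p ^ (2 * l) = -u} = if Even (m / s) then p ^ (2 * s) else 1 := by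
  have hp0 : 0 < p := (Fact.out : p.Prime).pos
  have hunit : ∀ u : Fˣ, (u : F) ^ p ^ (2 * l) = -u ↔ u ^ (p ^ (2 * l) - 1) = -1 := by
    intro u
    rw [← Units.val_inj, Units.val_pow_eq_pow_val, Units.val_neg, Units.val_one]
    conv_rhs => rw [← mul_left_inj' u.ne_zero, ← pow_succ,
      Nat.sub_add_cancel (Nat.one_le_pow _ _ hp0), neg_one_mul]
  rw [card_filter_eq_card_filter_units_add, if_pos (by simp [hp0.ne']),
    filter_congr fun u _ => hunit u]
  split_ifs with heven
  · rw [IsCyclic.card_pow_eq ((exists_pow_eq_neg_one_iff hp hF hs hs0).mpr heven),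
      Fintype.card_units, hF, Nat.pow_sub_one_gcd_pow_sub_one, Nat.gcd_mul_left, Nat.gcd_comm, hs,
      Nat.sub_add_cancel (Nat.one_le_pow _ _ hp0)]
  · rw [card_eq_zero.mpr (filter_eq_empty_iff.mpr fun w _ hw =>
      heven ((exists_pow_eq_neg_one_iff hp hF hs hs0).mp ⟨w, hw⟩))]

theorem exists_pow_eq_algebraMap (hF : Fintype.card F = p ^ (2 * m)) (hs : l.gcd m = s)
    (hl : Odd (l / s)) {z : ZMod p} (hz : z ≠ 0) :
    ∃ w : F, w ≠ 0 ∧ w ^ (p ^ l + 1) = algebraMap (ZMod p) F z := by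
  have hc : algebraMap (ZMod p) F z ≠ 0 := (map_ne_zero _).mpr hz
  obtain ⟨k, hk⟩ : p - 1 ∣ Nat.card Fˣ / (Nat.card Fˣ).gcd (p ^ l + 1) := by
    rw [gcd_card_units_pow_add_one hF hs hl, card_units_of_card_eq hF]
    refine (Nat.sub_one_dvd_pow_sub_one p s).trans (Nat.dvd_div_of_mul_dvd ?_)
    rw [← one_pow 2, ← Nat.sq_sub_sq, ← pow_mul, mul_comm s]
    exact Nat.pow_sub_one_dvd_pow_sub_one p (Nat.mul_dvd_mul_left 2 (hs ▸ Nat.gcd_dvd_right l m))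
  have hpow : Units.mk0 _ hc ^ (Nat.card Fˣ / (Nat.card Fˣ).gcd (p ^ l + 1)) = 1 := by
    rw [hk, pow_mul, Units.ext_iff, Units.val_pow_eq_pow_val, Units.val_pow_eq_pow_val,
      Units.val_mk0, ← map_pow, ZMod.pow_card_sub_one_eq_one hz, map_one, one_pow, Units.val_one]
  obtain ⟨w, hw⟩ := (IsCyclic.exists_pow_eq_iff _ _).mpr hpow
  exact ⟨w, w.ne_zero, by simpa using congrArg Units.val hw⟩

theorem pow_add_one_dvd_card_trace_pow_eq_one (hF : Fintype.card F = p ^ (2 * m))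
    (hs : l.gcd m = s) (hl : Odd (l / s)) :
    p ^ s + 1 ∣ #{x : F | Algebra.trace (ZMod p) F (x ^ (p ^ l + 1)) = 1} := by
  rw [card_filter_eq_card_filter_units_add, if_neg (by simp), add_zero,
    ← gcd_card_units_pow_add_one hF hs hl, ← IsCyclic.card_powMonoidHom_ker]
  simpa using MonoidHom.card_ker_dvd_card_filter (powMonoidHom (p ^ l + 1) : Fˣ →* Fˣ)
    (fun v => Algebra.trace (ZMod p) F v = 1)

theorem powCharSum_traceChar_algebraMap (hF : Fintype.card F = p ^ (2 * m)) (hs : l.gcd m = s)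
    (hl : Odd (l / s)) (z : ZMod p) (hz : z ≠ 0) :
    powCharSum (traceChar p F) (p ^ l + 1) (algebraMap (ZMod p) F z) =
      powCharSum (traceChar p F) (p ^ l + 1) 1 := by
  obtain ⟨w, hw, hwz⟩ := exists_pow_eq_algebraMap hF hs hl hz
  rw [← hwz, ← mul_one (w ^ _), powCharSum_pow_mul _ _ hw]

theorem natCast_mul_card_trace_pow_eq_one_eq_sub (hF : Fintype.card F = p ^ (2 * m))
    (hs : l.gcd m = s) (hl : Odd (l / s)) :
    (p : ℂ) * #{x : F | Algebra.trace (ZMod p) F (x ^ (p ^ l + 1)) = 1} =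
      p ^ (2 * m) - powCharSum (traceChar p F) (p ^ l + 1) 1 := by
  rw [natCast_mul_card_trace_pow_eq_one, Fintype.sum_eq_add_sum_compl 0,
    sum_compl_stdAddChar_neg_mul (powCharSum_traceChar_algebraMap hF hs hl), map_zero,
    powCharSum_zero, hF, neg_zero, AddChar.map_zero_eq_one, one_mul]
  push_cast
  ring

theorem powCharSum_traceChar_one_sq (hp : p ≠ 2) (hF : Fintype.card F = p ^ (2 * m))
    (hs : l.gcd m = s) (hl : Odd (l / s)) :
    powCharSum (traceChar p F) (p ^ l + 1) 1 ^ 2 =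
      (p : ℂ) ^ (2 * (m + if Even (m / s) then s else 0)) := by
  have hs0 : 0 < s := Nat.pos_of_ne_zero fun h => by simp [h] at hl
  rw [sq]
  nth_rewrite 2 [← powCharSum_traceChar_algebraMap hF hs hl (-1) (neg_ne_zero.mpr one_ne_zero)]
  rw [map_neg, map_one, powCharSum_one_mul_neg_one p hp, hF, card_pow_char_pow_eq_neg hp hF hs hs0]
  split_ifs <;> push_cast <;> ring

theorem powCharSum_traceChar_one (hp : p ≠ 2) (hF : Fintype.card F = p ^ (2 * m))
    (hs : l.gcd m = s) (hl : Odd (l / s)) :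
    powCharSum (traceChar p F) (p ^ l + 1) 1 =
      -(p : ℂ) ^ (m + if Even (m / s) then s else 0) := by
  have hs0 : 0 < s := Nat.pos_of_ne_zero fun h => by simp [h] at hl
  have hsm : s * (m / s) = m := Nat.mul_div_cancel' (hs ▸ Nat.gcd_dvd_right l m)
  obtain ⟨a, ha, hma⟩ : ∃ a, Odd a ∧ m + (if Even (m / s) then s else 0) = s * a := by
    split_ifs with h
    · exact ⟨m / s + 1, h.add_one, by rw [mul_add_one, hsm]⟩
    · exact ⟨m / s, Nat.not_even_iff_odd.mp h, by rw [add_zero, hsm]⟩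
  set N := #{x : F | Algebra.trace (ZMod p) F (x ^ (p ^ l + 1)) = 1}
  set T : ℤ := (p : ℤ) ^ (2 * m) - p * N
  have hT : (T : ℂ) = powCharSum (traceChar p F) (p ^ l + 1) 1 := by
    push_cast [T]
    linear_combination -natCast_mul_card_trace_pow_eq_one_eq_sub hF hs hl
  have hT2 : T ^ 2 = ((p : ℤ) ^ (s * a)) ^ 2 := by
    have : (T : ℂ) ^ 2 = (((p : ℤ) ^ (s * a)) ^ 2 : ℤ) := by
      rw [hT, powCharSum_traceChar_one_sq hp hF hs hl, hma]
      push_cast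
      ring
    exact_mod_cast this
  have hmod : T ≡ 1 [ZMOD p ^ s + 1] := by
    have hdvdN : ((p ^ s + 1 : ℕ) : ℤ) ∣ N :=
      Int.natCast_dvd_natCast.mpr (pow_add_one_dvd_card_trace_pow_eq_one hF hs hl)
    have hdvdq : (p : ℤ) ^ s + 1 ∣ (p : ℤ) ^ (2 * m) - 1 := by
      have h2 := sub_dvd_pow_sub_pow ((p : ℤ) ^ (2 * s)) 1 (m / s)
      rw [one_pow, ← pow_mul, mul_assoc, hsm] at h2
      exact (Dvd.intro ((p : ℤ) ^ s - 1) (by ring)).trans h2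
    push_cast at hdvdN
    refine Int.modEq_iff_dvd.mpr ?_
    rw [show 1 - T = p * N - ((p : ℤ) ^ (2 * m) - 1) by ring]
    exact dvd_sub (hdvdN.mul_left _) hdvdq
  rw [← hT, Int.eq_neg_pow_of_sq_eq_of_modEq (Fact.out : p.Prime).two_le hs0 ha hT2 hmod, hma]
  push_cast
  ring

end FieldOfSquareOrder

section Psi3

variable {p : ℕ} [Fact p.Prime] {e l : ℕ}

theorem weilSum_zero_right [Fintype (GaloisField p e)] (a : GaloisField p e) :
    weilSum p e l a 0 = powCharSum (traceChar p (GaloisField p e)) (p ^ l + 1) a := by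
  simp only [weilSum, powCharSum, zero_mul, add_zero, zetaP_pow_val, tr, traceChar_apply]
  convert rfl

theorem psi3_zero [Fintype (GaloisField p e)] :
    psi3 p e l 0 = ((p : ℂ) - 1) ^ 2 / 2 * (p : ℂ) ^ ((e : ℤ) - 3) *
      ∑ z ∈ ({0}ᶜ : Finset (ZMod p)), ZMod.stdAddChar (-z) *
        powCharSum (traceChar p (GaloisField p e)) (p ^ l + 1) (algebraMap (ZMod p) _ z) := by
  simp only [psi3, zero_mul, weilSum_zero_right, zetaP_pow_val, sum_const, card_compl,
    card_singleton, ZMod.card, nsmul_eq_mul, mul_sum]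
  refine sum_congr rfl fun z _ => ?_
  rw [Nat.cast_pred (Fact.out : p.Prime).pos]
  ring

theorem psi3_zero_eq_of_gcd {m s : ℕ} (hp : p ≠ 2) (hm : 0 < m) (hs : l.gcd m = s)
    (hl : Odd (l / s)) :
    psi3 p (2 * m) l 0 = ((p : ℂ) - 1) ^ 2 / 2 * (p : ℂ) ^
      (((2 * m : ℕ) : ℤ) + m + ((if Even (m / s) then s else 0 : ℕ) : ℤ) - 3) := by
  classical
  have := Fintype.ofFinite (GaloisField p (2 * m))
  have hF : Fintype.card (GaloisField p (2 * m)) = p ^ (2 * m) := by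
    rw [← Nat.card_eq_fintype_card, GaloisField.card p _ (by omega)]
  have hp0 : (p : ℂ) ≠ 0 := Nat.cast_ne_zero.mpr (Fact.out : p.Prime).ne_zero
  rw [psi3_zero, sum_compl_stdAddChar_neg_mul (powCharSum_traceChar_algebraMap hF hs hl),
    powCharSum_traceChar_one hp hF hs hl, neg_neg, mul_assoc, ← zpow_natCast (p : ℂ) (m + _),
    ← zpow_add₀ hp0]
  push_cast
  ring_nf

end Psi3

theorem psi3_zero_eval_general (p e l m s : ℕ) [Fact p.Prime] (hp : Odd p)
    (hm : 1 ≤ m) (he : e = 2 * m) (hs : s = Nat.gcd l e) (hsm : s ∣ m) :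
    (Odd (m / s) →
      psi3 p e l 0 = ((p : ℂ) - 1) ^ 2 / 2 * (p : ℂ) ^ ((e : ℤ) + m - 3)) ∧
    (Even (m / s) →
      psi3 p e l 0 = ((p : ℂ) - 1) ^ 2 / 2 * (p : ℂ) ^ ((e : ℤ) + m + s - 3)) := by
  subst he
  obtain ⟨hgcd, hodd⟩ := Nat.gcd_eq_and_odd_div_of_gcd_two_mul_eq hm hs.symm hsm
  have hp2 : p ≠ 2 := by rintro rfl; exact Nat.not_even_iff_odd.mpr hp even_two
  rw [psi3_zero_eq_of_gcd hp2 hm hgcd hodd]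
  exact ⟨fun h => by rw [if_neg (Nat.not_even_iff_odd.mpr h), Nat.cast_zero, add_zero],
    fun h => by rw [if_pos h]⟩

/-- the value of `ψ_3(0)` (paper Lemma 9). -/
theorem psi3_zero_eval (p e l m s : ℕ) [Fact p.Prime] (hp : Odd p)
    (hl : 0 < l) (hm : 1 ≤ m) (he : e = 2 * m) (hs : s = Nat.gcd l e) (hsm : s ∣ m) :
    (Odd (m / s) →
      psi3 p e l 0 = ((p : ℂ) - 1) ^ 2 / 2 * (p : ℂ) ^ ((e : ℤ) + m - 3)) ∧
    (Even (m / s) →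
      psi3 p e l 0 = ((p : ℂ) - 1) ^ 2 / 2 * (p : ℂ) ^ ((e : ℤ) + m + s - 3)) :=
  psi3_zero_eval_general p e l m s hp hm he hs hsm

end
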